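/- Let G be a daisy cube of dimension n, i.e., the subgraph of the hypercube Q_n induced by a nonempty downward-closed vertex set V ⊆ {0,1}^n, and for i ∈ {1,…,n} let |E_i| be the number of edges of G using direction i. Then the Wiener index of G satisfies W(G) = |V(G)|·|E(G)| − Σ_{i=1}^n |E_i|². -/

import Mathlib

/-- Vertices of the hypercube `Q_n`: binary strings of length `n`. -/
abbrev Vtx (n : ℕ) := Fin n → Bool

/-- The subgraph of the hypercube `Q_n` induced by a set `V` of vertices:
two vertices are adjacent iff they differ in precisely one coordinate
(i.e. their Hamming distance is `1`). -/
def cubeGraph {n : ℕ} (V : Finset (Vtx n)) : SimpleGraph {u : Vtx n // u ∈ V} where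
  Adj u v := hammingDist u.1 v.1 = 1
  symm := ⟨fun u v h => (hammingDist_comm v.1 u.1).trans h⟩
  loopless := ⟨fun u h => by simp [hammingDist_self] at h⟩

instance {n : ℕ} {V : Finset (Vtx n)} : DecidableRel (cubeGraph V).Adj :=
  fun u v => inferInstanceAs (Decidable (hammingDist u.1 v.1 = 1))

/-- A set of vertices of `Q_n` is downward closed if `u ≤ v` componentwise
and `v ∈ V` imply `u ∈ V`. -/
def DownClosed {n : ℕ} (V : Finset (Vtx n)) : Prop :=
  ∀ u v : Vtx n, (∀ i, u i ≤ v i) → v ∈ V → u ∈ V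

/-- The Wiener index: the sum of graph distances over all unordered pairs of vertices. -/
noncomputable def wiener {α : Type*} [Fintype α] [DecidableEq α] (G : SimpleGraph α) : ℕ :=
  ∑ p : Sym2 α, Sym2.lift ⟨fun u v => G.dist u v, fun _ _ => SimpleGraph.dist_comm⟩ p

/-- The set of edges of the induced subgraph on `V` using direction `i`,
i.e. whose endpoints differ in coordinate `i`. -/
def dirEdges {n : ℕ} (V : Finset (Vtx n)) (i : Fin n) : Finset (Sym2 {u : Vtx n // u ∈ V}) :=
  (cubeGraph V).edgeFinset.filter
    (fun e => Sym2.lift ⟨fun u v => decide (u.1 i ≠ v.1 i),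
      fun u v => by rw [decide_eq_decide]; exact ne_comm⟩ e = true)

/-!
Down-closedness makes `cubeGraph V` an isometric subgraph of `Q_n`: from `u` towards `v ≠ u` one
can always step along a coordinate where they differ, lowering one where `v` is `0` (staying below
`u`) or, if there is none, raising one (staying below `v`). Hence the distance is the Hamming
distance and `W(G) = ∑ᵢ n₁(i) n₀(i)`, where `n_b(i)` counts the vertices with `i`-th coordinate
`b`. Matching each vertex with `i`-th coordinate `1` to its lowering gives `|E_i| = n₁(i)`, and
`|V| = n₁(i) + n₀(i)`, `|E| = ∑ᵢ |E_i|` finish the computation.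
-/

open Finset Function

namespace SimpleGraph

variable {α : Type*} {G : SimpleGraph α}

theorem dist_eq_of_forall_exists_adj (d : α → α → ℕ) (hd : ∀ u v, d u v = 0 ↔ u = v)
    (hadj : ∀ u w v, G.Adj u w → d u v ≤ d w v + 1)
    (hstep : ∀ u v, u ≠ v → ∃ w, G.Adj u w ∧ d w v + 1 = d u v) (u v : α) :
    G.dist u v = d u v := by
  have le_length : ∀ {u} (p : G.Walk u v), d u v ≤ p.length := by
    intro u p
    induction p with
    | nil => simp [(hd _ _).2 rfl]
    | cons h p ih => simpa using (hadj _ _ _ h).trans (Nat.add_le_add_right ih 1)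
  have exists_walk : ∀ k u, d u v = k → ∃ p : G.Walk u v, p.length = k := by
    intro k
    induction k with
    | zero => rintro u hu; obtain rfl := (hd u v).1 hu; exact ⟨.nil, rfl⟩
    | succ k ih =>
      intro u hu
      obtain ⟨w, huw, hw⟩ := hstep u v (by rintro rfl; simp [(hd u u).2 rfl] at hu)
      obtain ⟨p, hp⟩ := ih w (by omega)
      exact ⟨.cons huw p, by simp [hp]⟩
  obtain ⟨p, hp⟩ := exists_walk _ u rfl
  obtain ⟨q, hq⟩ := Reachable.exists_walk_length_eq_dist ⟨p⟩
  exact le_antisymm (hp ▸ dist_le p) (hq ▸ le_length q)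

end SimpleGraph

theorem Sym2.two_mul_sum_lift {α : Type*} [Fintype α] [DecidableEq α]
    (f : {f : α → α → ℕ // ∀ a b, f a b = f b a}) (hdiag : ∀ a, f.1 a a = 0) :
    2 * ∑ p : Sym2 α, Sym2.lift f p = ∑ a, ∑ b, f.1 a b := by
  have fiber_card (a b : α) (hab : a ≠ b) :
      #{x : α × α | s(x.1, x.2) = s(a, b)} = 2 := by
    rw [← card_pair (a := (a, b)) (b := (b, a)) (by simp [hab])]
    congr 1
    ext ⟨c, d⟩
    simp
  calc 2 * ∑ p : Sym2 α, Sym2.lift f p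
      = ∑ p : Sym2 α, ∑ x : α × α with s(x.1, x.2) = p, Sym2.lift f p := by
        rw [mul_sum]
        refine sum_congr rfl fun p _ => ?_
        induction p using Sym2.ind with
        | _ a b =>
          rcases eq_or_ne a b with rfl | hab
          · simp [hdiag]
          · rw [sum_const, fiber_card a b hab, smul_eq_mul]
    _ = ∑ x : α × α, f.1 x.1 x.2 :=
        sum_fiberwise_of_maps_to' (fun _ _ => mem_univ _) (Sym2.lift f)
    _ = ∑ a, ∑ b, f.1 a b := Fintype.sum_prod_type _

theorem two_mul_wiener {α : Type*} [Fintype α] [DecidableEq α] (G : SimpleGraph α) :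
    2 * wiener G = ∑ u, ∑ v, G.dist u v :=
  Sym2.two_mul_sum_lift _ fun _ => SimpleGraph.dist_self

theorem sum_card_filter_ne {α : Type*} [Fintype α] (p : α → Bool) :
    ∑ a, #{b | p a ≠ p b} = 2 * (#{a | p a = true} * #{a | p a = false}) := by
  have fiber (c : Bool) : #{b | c ≠ p b} = #{b | p b = !c} := by
    congr 1; ext b; cases c <;> cases p b <;> simp
  rw [← sum_fiberwise_of_maps_to' (t := univ) (g := p) (fun _ _ => mem_univ _)
    (fun c => #{b | c ≠ p b})]
  simp only [Fintype.sum_bool, sum_const, smul_eq_mul, fiber, Bool.not_true, Bool.not_false]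
  ring

section Hamming

variable {ι : Type*} [Fintype ι]

theorem sum_sum_hammingDist {α : Type*} [Fintype α] (x : α → ι → Bool) :
    ∑ a, ∑ b, hammingDist (x a) (x b) = 2 * ∑ i, #{a | x a i = true} * #{a | x a i = false} := by
  calc ∑ a, ∑ b, hammingDist (x a) (x b) = ∑ i, ∑ a, #{b | x a i ≠ x b i} := by
        simp only [hammingDist, card_filter]
        exact (sum_congr rfl fun a _ => sum_comm).trans sum_comm
    _ = _ := by simp only [sum_card_filter_ne, mul_sum]

variable {β : Type*} [DecidableEq ι] [DecidableEq β]

theorem hammingDist_update_add_one {x y : ι → β} {i : ι} (h : x i ≠ y i) :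
    hammingDist (update x i (y i)) y + 1 = hammingDist x y := by
  have : ({j | update x i (y i) j ≠ y j} : Finset ι) = ({j | x j ≠ y j} : Finset ι).erase i := by
    ext j
    rcases eq_or_ne j i with rfl | hj <;> simp [*]
  rw [hammingDist, hammingDist, this, card_erase_add_one (by simpa using h)]

theorem hammingDist_update_self {x : ι → β} {i : ι} {b : β} (h : x i ≠ b) :
    hammingDist x (update x i b) = 1 := by
  simpa [eq_comm] using
    hammingDist_update_add_one (x := x) (y := update x i b) (i := i) (by simpa using h)

theorem eq_update_of_hammingDist_eq_one {x y : ι → β} {i : ι} (h : hammingDist x y = 1)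
    (hi : x i ≠ y i) : y = update x i (y i) := by
  have := hammingDist_update_add_one hi
  exact (hammingDist_eq_zero.1 (by omega)).symm

end Hamming

theorem mem_dirEdges_mk {n : ℕ} {V : Finset (Vtx n)} {i : Fin n} {a b : V} :
    s(a, b) ∈ dirEdges V i ↔ hammingDist a.1 b.1 = 1 ∧ a.1 i ≠ b.1 i := by
  simp only [dirEdges, mem_filter, SimpleGraph.mem_edgeFinset, SimpleGraph.mem_edgeSet,
    Sym2.lift_mk, decide_eq_true_eq]
  rfl

theorem card_edgeFinset_cubeGraph {n : ℕ} (V : Finset (Vtx n)) :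
    #(cubeGraph V).edgeFinset = ∑ i, #(dirEdges V i) := by
  set E := (cubeGraph V).edgeFinset
  have unique_direction (e) (he : e ∈ E) : #(univ.bipartiteAbove (· ∈ dirEdges V ·) e) = 1 := by
    induction e using Sym2.ind with
    | _ a b =>
      have hab : hammingDist a.1 b.1 = 1 := SimpleGraph.mem_edgeFinset.1 he
      simp only [bipartiteAbove, mem_dirEdges_mk, hab, true_and]
      exact hab
  have dirEdges_subset (i) : E.bipartiteBelow (· ∈ dirEdges V ·) i = dirEdges V i :=
    (filter_mem_eq_inter).trans (inter_eq_right.2 (filter_subset _ _))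
  calc #E = ∑ e ∈ E, #(univ.bipartiteAbove (· ∈ dirEdges V ·) e) := by
        rw [sum_congr rfl unique_direction, card_eq_sum_ones]
    _ = ∑ i, #(dirEdges V i) := by
        simp only [sum_card_bipartiteAbove_eq_sum_card_bipartiteBelow, dirEdges_subset]

namespace DownClosed

variable {n : ℕ} {V : Finset (Vtx n)}

theorem update_false_mem (hV : DownClosed V) {u : Vtx n} (hu : u ∈ V) (i : Fin n) :
    update u i false ∈ V := by
  refine hV _ u (fun j => ?_) hu
  rcases eq_or_ne j i with rfl | hj <;> simp [*]

theorem exists_update_mem (hV : DownClosed V) {u v : Vtx n} (hu : u ∈ V) (hv : v ∈ V)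
    (huv : u ≠ v) : ∃ i, u i ≠ v i ∧ update u i (v i) ∈ V := by
  by_cases h : ∃ i, u i ≠ v i ∧ v i = false
  · obtain ⟨i, hi, hvi⟩ := h
    exact ⟨i, hi, hvi ▸ hV.update_false_mem hu i⟩
  · push Not at h
    obtain ⟨i, hi⟩ := Function.ne_iff.1 huv
    refine ⟨i, hi, hV _ v (fun j => ?_) hv⟩
    rcases eq_or_ne j i with rfl | hj
    · simp
    · rw [update_of_ne hj]
      by_cases hj' : u j = v j
      · exact hj'.le
      · simp [h j hj']

theorem dist_cubeGraph (hV : DownClosed V) (u v : V) :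
    (cubeGraph V).dist u v = hammingDist u.1 v.1 := by
  refine SimpleGraph.dist_eq_of_forall_exists_adj (fun u v => hammingDist u.1 v.1)
    (fun u v => hammingDist_eq_zero.trans Subtype.ext_iff.symm) (fun u w v huw => ?_)
    (fun u v huv => ?_) u v
  · have : hammingDist u.1 w.1 = 1 := huw
    simpa [this, add_comm] using hammingDist_triangle u.1 w.1 v.1
  · obtain ⟨i, hi, hmem⟩ := hV.exists_update_mem u.2 v.2 (Subtype.coe_ne_coe.2 huv)
    exact ⟨⟨_, hmem⟩, hammingDist_update_self hi, hammingDist_update_add_one hi⟩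

theorem wiener_cubeGraph (hV : DownClosed V) :
    wiener (cubeGraph V) = ∑ i, #{u : V | u.1 i = true} * #{u : V | u.1 i = false} := by
  have := two_mul_wiener (cubeGraph V)
  simp only [hV.dist_cubeGraph, sum_sum_hammingDist (fun u : V => u.1)] at this
  omega

theorem card_dirEdges (hV : DownClosed V) (i : Fin n) :
    #(dirEdges V i) = #{u : V | u.1 i = true} := by
  let down (u : V) : V := ⟨update u.1 i false, hV.update_false_mem u.2 i⟩
  have eq_down {a b : V} (hab : hammingDist a.1 b.1 = 1) (hb : b.1 i = false)
      (hi : a.1 i ≠ b.1 i) : b = down a :=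
    Subtype.ext <| (eq_update_of_hammingDist_eq_one hab hi).trans (by rw [hb])
  symm
  refine card_bij (fun u _ => s(u, down u)) (fun u hu => ?_) (fun u hu v hv huv => ?_)
    (fun e he => ?_)
  · have hu : u.1 i = true := (mem_filter.1 hu).2
    exact mem_dirEdges_mk.2 ⟨hammingDist_update_self (by simp [hu]), by simp [down, hu]⟩
  · rcases Sym2.eq_iff.1 huv with ⟨h, -⟩ | ⟨h, -⟩
    · exact h
    · have := congrArg (fun w : V => w.1 i) h
      simp [down, (mem_filter.1 hu).2] at this
  · induction e using Sym2.ind with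
    | _ a b =>
      obtain ⟨hab, hi⟩ := mem_dirEdges_mk.1 he
      cases ha : a.1 i
      · have hb : b.1 i = true := by simpa [ha] using hi.symm
        refine ⟨b, by simp [hb], ?_⟩
        rw [Sym2.eq_swap, ← eq_down (hammingDist_comm a.1 b.1 ▸ hab) ha hi.symm]
      · have hb : b.1 i = false := by simpa [ha] using hi.symm
        exact ⟨a, by simp [ha], by rw [← eq_down hab hb hi]⟩

end DownClosed

theorem daisy_wiener_formula_general {n : ℕ} (V : Finset (Vtx n))
    (hdc : DownClosed V) :
    (wiener (cubeGraph V) : ℤ) =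
      (V.card : ℤ) * ((cubeGraph V).edgeFinset.card : ℤ) -
        ∑ i : Fin n, ((dirEdges V i).card : ℤ) ^ 2 := by
  have hsplit (i : Fin n) :
      (V.card : ℤ) = #{u : V | u.1 i = true} + #{u : V | u.1 i = false} := by
    have := card_filter_add_card_filter_not (s := univ) (fun u : V => u.1 i = true)
    simp only [Bool.not_eq_true, card_univ, Fintype.card_coe] at this
    exact_mod_cast this.symm
  rw [hdc.wiener_cubeGraph, card_edgeFinset_cubeGraph]
  push_cast
  rw [mul_sum, ← sum_sub_distrib]
  refine sum_congr rfl fun i _ => ?_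
  rw [hdc.card_dirEdges, hsplit i]
  ring

/-- For a daisy cube `G`, with `|E_i|` the number of edges using
direction `i`: `W(G) = |V(G)|·|E(G)| - ∑_{i=1}^n |E_i|²`. -/
theorem daisy_wiener_formula {n : ℕ} (V : Finset (Vtx n))
    (hne : V.Nonempty) (hdc : DownClosed V) :
    (wiener (cubeGraph V) : ℤ) =
      (V.card : ℤ) * ((cubeGraph V).edgeFinset.card : ℤ) -
        ∑ i : Fin n, ((dirEdges V i).card : ℤ) ^ 2 :=
  daisy_wiener_formula_general V hdc
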